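/- arXiv:1905.07741 — 2 statements merged into one kernel-verified Lean document; each statement's English description precedes it below -/
import Mathlib

section
/- For all natural numbers α, β, k, one has the identity ∑_{j=0}^{k} ((-2)^j / j!) · C(k, k-j) · ∑_{n=0}^{j} C(j,n) · Γ(1/2 + n + α) · Γ(1/2 + j - n + β) = (Γ(α+1/2)·Γ(β+1/2) / Γ(α+β+1)) · ∑_{j=0}^{k} ((-2)^j / j!) · C(k, k-j) · Γ(α+β+1+j). -/
/-!
Writing `Γ(a + n) = Γ(a) · a⁽ⁿ⁾` with the rising factorial `a⁽ⁿ⁾`, the inner sum becomes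
`Γ(a) Γ(b) · ∑ₙ C(j, n) a⁽ⁿ⁾ b⁽ʲ⁻ⁿ⁾`, which is `Γ(a) Γ(b) · (a + b)⁽ʲ⁾` by the Chu–Vandermonde
identity for rising factorials, i.e. `Γ(a) Γ(b) Γ(a + b + j) / Γ(a + b)`. With `a = α + 1/2` and
`b = β + 1/2` the two sides then agree term by term in `j`.
-/

open Finset Polynomial

theorem descPochhammer_smeval_int_eq_eval {R : Type*} [CommRing R] (r : R) (n : ℕ) :
    (descPochhammer ℤ n).smeval r = (descPochhammer R n).eval r := by
  rw [← aeval_eq_smeval, aeval_def, ← eval_map, descPochhammer_map]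

theorem ascPochhammer_eval_add {R : Type*} [CommRing R] (r s : R) (k : ℕ) :
    (ascPochhammer R k).eval (r + s) = ∑ ij ∈ antidiagonal k,
      k.choose ij.1 * ((ascPochhammer R ij.1).eval r * (ascPochhammer R ij.2).eval s) := by
  -- `x⁽ⁿ⁾ = (-1)ⁿ (-x)₍ₙ₎`, so this is the falling-factorial Chu–Vandermonde identity at `-r, -s`.
  have h := Ring.descPochhammer_smeval_add k (Commute.all (-r) (-s))
  simp only [descPochhammer_smeval_int_eq_eval] at h
  rw [← neg_neg (r + s), ascPochhammer_eval_neg_eq_descPochhammer, neg_add, h, mul_sum]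
  refine sum_congr rfl fun ij hij => ?_
  rw [← mem_antidiagonal.mp hij, ← neg_neg r, ← neg_neg s, ascPochhammer_eval_neg_eq_descPochhammer,
    ascPochhammer_eval_neg_eq_descPochhammer, neg_neg, neg_neg, pow_add]
  ring

namespace Real

theorem Gamma_add_nat_eq_mul_ascPochhammer {a : ℝ} (ha : ∀ m : ℕ, a ≠ -m) (n : ℕ) :
    Gamma (a + n) = Gamma a * (ascPochhammer ℝ n).eval a := by
  induction n with
  | zero => simp
  | succ n ih =>
    have : a + n ≠ 0 := fun h => ha n (eq_neg_of_add_eq_zero_left h)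
    rw [Nat.cast_succ, ← add_assoc, Gamma_add_one this, ih, ascPochhammer_succ_eval]
    ring

theorem sum_antidiagonal_choose_mul_Gamma_add_mul_Gamma_add {a b : ℝ} (ha : ∀ m : ℕ, a ≠ -m)
    (hb : ∀ m : ℕ, b ≠ -m) (hab : ∀ m : ℕ, a + b ≠ -m) (k : ℕ) :
    ∑ ij ∈ antidiagonal k, (k.choose ij.1 : ℝ) * (Gamma (a + ij.1) * Gamma (b + ij.2)) =
      Gamma a * Gamma b / Gamma (a + b) * Gamma (a + b + k) := by
  rw [Gamma_add_nat_eq_mul_ascPochhammer hab, ← mul_assoc, div_mul_cancel₀ _ (Gamma_ne_zero hab),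
    ascPochhammer_eval_add, mul_sum]
  refine sum_congr rfl fun ij _ => ?_
  rw [Gamma_add_nat_eq_mul_ascPochhammer ha, Gamma_add_nat_eq_mul_ascPochhammer hb]
  ring

end Real

theorem stmt0 (α β k : ℕ) :
    ∑ j ∈ Finset.range (k + 1), ((-2 : ℝ) ^ j / (Nat.factorial j)) * (k.choose (k - j)) *
      ∑ n ∈ Finset.range (j + 1), (j.choose n) *
        Real.Gamma (1 / 2 + n + α) * Real.Gamma (1 / 2 + (j : ℝ) - n + β)
    = (Real.Gamma ((α : ℝ) + 1 / 2) * Real.Gamma ((β : ℝ) + 1 / 2) /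
        Real.Gamma ((α : ℝ) + β + 1)) *
      ∑ j ∈ Finset.range (k + 1), ((-2 : ℝ) ^ j / (Nat.factorial j)) * (k.choose (k - j)) *
        Real.Gamma ((α : ℝ) + β + 1 + j) := by
  have ne_neg_natCast {a : ℝ} (ha : 0 < a) (m : ℕ) : a ≠ -m := by
    have : (0 : ℝ) ≤ m := m.cast_nonneg
    exact fun h => by linarith
  have inner (j : ℕ) : ∑ n ∈ range (j + 1), (j.choose n : ℝ) *
        Real.Gamma (1 / 2 + n + α) * Real.Gamma (1 / 2 + (j : ℝ) - n + β) =
      Real.Gamma (α + 1 / 2) * Real.Gamma (β + 1 / 2) / Real.Gamma (α + β + 1) *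
        Real.Gamma (α + β + 1 + j) := by
    have h := Real.sum_antidiagonal_choose_mul_Gamma_add_mul_Gamma_add
      (ne_neg_natCast (by positivity : (0 : ℝ) < α + 1 / 2))
      (ne_neg_natCast (by positivity : (0 : ℝ) < β + 1 / 2))
      (ne_neg_natCast (by positivity : (0 : ℝ) < α + 1 / 2 + (β + 1 / 2))) j
    rw [Nat.sum_antidiagonal_eq_sum_range_succ
        (fun n l => (j.choose n : ℝ) * (Real.Gamma (α + 1 / 2 + n) * Real.Gamma (β + 1 / 2 + l))),
      show (α : ℝ) + 1 / 2 + (β + 1 / 2) = α + β + 1 by ring] at h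
    rw [← h]
    refine sum_congr rfl fun n hn => ?_
    rw [Nat.cast_sub (Nat.lt_succ_iff.mp (mem_range.mp hn))]
    ring_nf
  simp only [inner, mul_sum]
  exact sum_congr rfl fun j _ => by ring
end

section
/- Let L_k(x) = ∑_{j=0}^{k} C(k, k-j) · (-x)^j / j! be the k-th Laguerre polynomial. Then for all natural numbers α, β, k, the double integral π^{-1} ∫_{ℝ²} x^{2α} ξ^{2β} e^{-(x²+ξ²)} (-1)^k L_k(2(x²+ξ²)) dx dξ equals ₂F₁(α+β+1, -k; 1; 2) · (-1)^k · (2α)!(2β)! / (4^{α+β} α! β!), where ₂F₁(α+β+1,-k;1;2) = ∑_{j=0}^{k} ((-2)^j/j!) C(k,j) · Γ(α+β+1+j)/Γ(α+β+1). -/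
open MeasureTheory Finset

/-- The `k`-th Laguerre polynomial. -/
noncomputable def lagPoly (k : ℕ) (x : ℝ) : ℝ :=
  ∑ j ∈ Finset.range (k + 1), (k.choose (k - j)) * (-x) ^ j / (Nat.factorial j)

/-- The terminating hypergeometric sum ₂F₁(a, -k; 1; 2). -/
noncomputable def hyp2F1 (a : ℝ) (k : ℕ) : ℝ :=
  ∑ j ∈ Finset.range (k + 1), ((-2 : ℝ) ^ j / (Nat.factorial j)) * (k.choose j) *
    Real.Gamma (a + j) / Real.Gamma a

open Polynomial in

lemma myGamma_half (m : ℕ) :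
    Real.Gamma ((m : ℝ) + 1/2) =
      Real.sqrt Real.pi * ((2*m).factorial / (4^m * m.factorial)) := by
  induction m with
  | zero =>
    rw [show ((0:ℕ):ℝ) + 1/2 = 1/2 by norm_num, Real.Gamma_one_half_eq]
    simp
  | succ m ih =>
    have h : ((m:ℝ) + 1/2) ≠ 0 := by positivity
    have e : ((m+1 : ℕ):ℝ) + 1/2 = ((m:ℝ) + 1/2) + 1 := by push_cast; ring
    rw [e, Real.Gamma_add_one h, ih]
    have h2 : 2*(m+1) = (2*m+1)+1 := by ring
    rw [h2, Nat.factorial_succ, Nat.factorial_succ, Nat.factorial_succ]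
    have h4 : (4:ℝ)^(m+1) = 4 * 4^m := by ring
    have hm : (m.factorial : ℝ) ≠ 0 := Nat.cast_ne_zero.mpr m.factorial_ne_zero
    have h4m : (4:ℝ)^m ≠ 0 := by positivity
    push_cast [h4]
    field_simp
    ring

lemma my_integrable_pow_gauss (n : ℕ) :
    Integrable (fun x : ℝ => x ^ n * Real.exp (-x^2)) := by
  have := integrable_rpow_mul_exp_neg_mul_sq (b := 1) one_pos
    (s := (n:ℝ)) (neg_one_lt_zero.trans_le (Nat.cast_nonneg _))
  simpa [Real.rpow_natCast] using this

lemma my_gauss_moment (m : ℕ) :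
    (∫ x : ℝ, x ^ (2*m) * Real.exp (-x^2)) = Real.Gamma ((m:ℝ) + 1/2) := by
  have h2 : (∫ x : ℝ, x ^ (2*m) * Real.exp (-x^2))
      = 2 * ∫ x in Set.Ioi (0:ℝ), x ^ (2*m) * Real.exp (-x^2) := by
    have h2' := integral_comp_abs (f := fun t : ℝ => t ^ (2*m) * Real.exp (-t^2))
    simp only [pow_mul, sq_abs] at h2' ⊢
    exact h2'
  have key := integral_rpow_mul_exp_neg_rpow (p := 2) (q := ((2*m : ℕ) : ℝ))
    two_pos (neg_one_lt_zero.trans_le (Nat.cast_nonneg (2*m)))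
  have h3 : (∫ x in Set.Ioi (0:ℝ), x ^ ((2*m : ℕ) : ℝ) * Real.exp (-x ^ (2:ℝ)))
      = ∫ x in Set.Ioi (0:ℝ), x ^ (2*m) * Real.exp (-x^2) := by
    refine setIntegral_congr_fun measurableSet_Ioi fun x hx => ?_
    rw [Real.rpow_natCast, show (2:ℝ) = ((2:ℕ):ℝ) by norm_num, Real.rpow_natCast]
  rw [h2, ← h3, key]
  rw [show (((2*m : ℕ) : ℝ) + 1)/2 = (m:ℝ) + 1/2 by push_cast; ring]
  ring

section Aux
open Polynomial

lemma my_negOnePow_smul (i : ℕ) (x : ℝ) : (i : ℤ).negOnePow • x = (-1:ℝ)^i * x := by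
  rw [Units.smul_def, Int.negOnePow_def, zpow_natCast, Units.val_pow_eq_pow_val, Units.val_neg,
    Units.val_one, zsmul_eq_mul]
  push_cast
  ring

lemma my_desc_smeval_neg (c : ℝ) (i : ℕ) :
    (descPochhammer ℤ i).smeval (-c) = (-1:ℝ)^i * (ascPochhammer ℝ i).eval c := by
  have h := Polynomial.ascPochhammer_smeval_neg_eq_descPochhammer (-c) i
  rw [neg_neg, Polynomial.ascPochhammer_smeval_eq_eval] at h
  rw [h, my_negOnePow_smul, ← mul_assoc, ← mul_pow]
  norm_num

lemma my_asc_vander (a b : ℝ) (j : ℕ) :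
    (ascPochhammer ℝ j).eval (a + b) =
      ∑ i ∈ Finset.range (j+1), (j.choose i : ℝ) *
        ((ascPochhammer ℝ i).eval a * (ascPochhammer ℝ (j-i)).eval b) := by
  have h1 : (ascPochhammer ℝ j).eval (a+b)
      = (-1:ℝ)^j * (descPochhammer ℤ j).smeval (-a + -b) := by
    rw [← Polynomial.ascPochhammer_smeval_eq_eval,
      show a + b = -(-a + -b) by ring,
      Polynomial.ascPochhammer_smeval_neg_eq_descPochhammer, my_negOnePow_smul]
  rw [h1, Ring.descPochhammer_smeval_add j (Commute.all _ _),
    Finset.Nat.sum_antidiagonal_eq_sum_range_succ_mk, Finset.mul_sum]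
  refine Finset.sum_congr rfl fun i hi => ?_
  have hij : i + (j - i) = j := Nat.add_sub_cancel' (Nat.lt_succ_iff.mp (Finset.mem_range.mp hi))
  rw [my_desc_smeval_neg, my_desc_smeval_neg]
  rw [show (-1:ℝ)^j * ((j.choose i : ℝ) * ((-1:ℝ)^i * (ascPochhammer ℝ i).eval a *
      ((-1:ℝ)^(j-i) * (ascPochhammer ℝ (j-i)).eval b)))
    = ((-1:ℝ)^i * (-1:ℝ)^(j-i)) * (-1:ℝ)^j * ((j.choose i : ℝ) *
      ((ascPochhammer ℝ i).eval a * (ascPochhammer ℝ (j-i)).eval b)) by ring,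
    ← pow_add, hij, ← mul_pow]
  norm_num

noncomputable def ggc (m : ℕ) : ℝ := (2*m).factorial / (4^m * m.factorial)

lemma ggc_succ (m : ℕ) : ggc (m+1) = ((m:ℝ) + 1/2) * ggc m := by
  unfold ggc
  rw [show 2*(m+1) = (2*m+1)+1 by ring, Nat.factorial_succ, Nat.factorial_succ,
    Nat.factorial_succ]
  have hm : (m.factorial : ℝ) ≠ 0 := Nat.cast_ne_zero.mpr m.factorial_ne_zero
  have h4m : (4:ℝ)^m ≠ 0 := by positivity
  push_cast [pow_succ]
  field_simp
  ring

lemma ggc_shift (a i : ℕ) :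
    ggc (a + i) = ggc a * (ascPochhammer ℝ i).eval ((a:ℝ) + 1/2) := by
  induction i with
  | zero => simp [ascPochhammer_zero]
  | succ i ih =>
    rw [show a + (i+1) = (a+i)+1 by ring, ggc_succ, ih, ascPochhammer_succ_eval]
    push_cast
    ring

lemma my_asc_eval_nat (n j : ℕ) :
    (ascPochhammer ℝ j).eval ((n:ℝ) + 1) = (n+j).factorial / n.factorial := by
  induction j with
  | zero => simp [Nat.factorial_ne_zero n, div_self, Nat.cast_ne_zero]
  | succ j ih =>
    rw [ascPochhammer_succ_eval, ih, show n + (j+1) = (n+j)+1 by ring, Nat.factorial_succ]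
    have h : ((n+j).factorial : ℝ) ≠ 0 := Nat.cast_ne_zero.mpr (n+j).factorial_ne_zero
    have h2 : (n.factorial : ℝ) ≠ 0 := Nat.cast_ne_zero.mpr n.factorial_ne_zero
    push_cast
    field_simp
    ring

noncomputable def gm (m : ℕ) : ℝ → ℝ := fun x => x ^ (2*m) * Real.exp (-x^2)

lemma gm_int (m : ℕ) : Integrable (gm m) := my_integrable_pow_gauss (2*m)

lemma gm_val (m : ℕ) : (∫ x : ℝ, gm m x) = Real.sqrt Real.pi * ggc m := by
  rw [show (∫ x : ℝ, gm m x) = ∫ x : ℝ, x ^ (2*m) * Real.exp (-x^2) from rfl,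
    my_gauss_moment, myGamma_half]; rfl

theorem stmt3 (α β k : ℕ) :
    Real.pi⁻¹ *
      (∫ z : ℝ × ℝ, z.1 ^ (2 * α) * z.2 ^ (2 * β) * Real.exp (-(z.1 ^ 2 + z.2 ^ 2)) *
        (-1 : ℝ) ^ k * lagPoly k (2 * (z.1 ^ 2 + z.2 ^ 2)))
    = hyp2F1 ((α : ℝ) + β + 1) k * (-1 : ℝ) ^ k *
        ((Nat.factorial (2 * α)) * (Nat.factorial (2 * β))) /
        (4 ^ (α + β) * Nat.factorial α * Nat.factorial β) := by
  have expand : ∀ x y : ℝ,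
      x ^ (2*α) * y ^ (2*β) * Real.exp (-(x^2 + y^2)) * (-1:ℝ)^k
          * lagPoly k (2*(x^2+y^2))
      = ∑ j ∈ Finset.range (k+1), ∑ i ∈ Finset.range (j+1),
          ((-1:ℝ)^k * (k.choose (k-j)) * (-2)^j / (j.factorial) * (j.choose i))
            * (gm (α+i) x * gm (β+(j-i)) y) := by
    intro x y
    unfold lagPoly
    rw [Finset.mul_sum]
    refine Finset.sum_congr rfl fun j hj => ?_
    rw [show (-(2*(x^2+y^2)))^j = (-2:ℝ)^j * (x^2+y^2)^j by rw [← neg_mul, mul_pow],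
      add_pow]
    simp only [Finset.mul_sum, Finset.sum_div]
    refine Finset.sum_congr rfl fun i hi => ?_
    show _ = _ * ((x ^ (2*(α+i)) * Real.exp (-x^2)) * (y ^ (2*(β+(j-i))) * Real.exp (-y^2)))
    rw [neg_add, Real.exp_add]
    simp only [← pow_mul]
    ring
  have hint : ∀ (c : ℝ) (m n : ℕ), Integrable (fun z : ℝ × ℝ =>
      c * (gm m z.1 * gm n z.2)) := by
    intro c m n
    rw [MeasureTheory.Measure.volume_eq_prod]
    exact ((gm_int m).mul_prod (gm_int n)).const_mul c
  have hswap : (∫ z : ℝ × ℝ, z.1 ^ (2 * α) * z.2 ^ (2 * β) *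
        Real.exp (-(z.1 ^ 2 + z.2 ^ 2)) * (-1 : ℝ) ^ k * lagPoly k (2 * (z.1 ^ 2 + z.2 ^ 2)))
      = ∑ j ∈ Finset.range (k+1), ∑ i ∈ Finset.range (j+1),
          ((-1:ℝ)^k * (k.choose (k-j)) * (-2)^j / (j.factorial) * (j.choose i))
            * ((Real.sqrt Real.pi * ggc (α+i)) * (Real.sqrt Real.pi * ggc (β+(j-i)))) := by
    simp only [expand]
    rw [integral_finset_sum _ (fun j _ => integrable_finset_sum _ (fun i _ => hint _ _ _))]
    refine Finset.sum_congr rfl fun j _ => ?_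
    rw [integral_finset_sum _ (fun i _ => hint _ _ _)]
    refine Finset.sum_congr rfl fun i _ => ?_
    rw [integral_const_mul, MeasureTheory.Measure.volume_eq_prod, integral_prod_mul, gm_val, gm_val]
  rw [hswap]
  have hππ : Real.sqrt Real.pi * Real.sqrt Real.pi = Real.pi :=
    Real.mul_self_sqrt Real.pi_pos.le
  have step2 : Real.pi⁻¹ * (∑ j ∈ Finset.range (k+1), ∑ i ∈ Finset.range (j+1),
          ((-1:ℝ)^k * (k.choose (k-j)) * (-2)^j / (j.factorial) * (j.choose i))
            * ((Real.sqrt Real.pi * ggc (α+i)) * (Real.sqrt Real.pi * ggc (β+(j-i)))))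
      = ∑ j ∈ Finset.range (k+1), ∑ i ∈ Finset.range (j+1),
          ((-1:ℝ)^k * (k.choose (k-j)) * (-2)^j / (j.factorial) * (j.choose i))
            * (ggc (α+i) * ggc (β+(j-i))) := by
    rw [Finset.mul_sum]
    refine Finset.sum_congr rfl fun j _ => ?_
    rw [Finset.mul_sum]
    refine Finset.sum_congr rfl fun i _ => ?_
    rw [show Real.pi⁻¹ * (((-1:ℝ)^k * (k.choose (k-j)) * (-2)^j / (j.factorial) * (j.choose i))
            * ((Real.sqrt Real.pi * ggc (α+i)) * (Real.sqrt Real.pi * ggc (β+(j-i)))))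
        = (Real.sqrt Real.pi * Real.sqrt Real.pi) * Real.pi⁻¹ *
          (((-1:ℝ)^k * (k.choose (k-j)) * (-2)^j / (j.factorial) * (j.choose i))
            * (ggc (α+i) * ggc (β+(j-i)))) by ring, hππ,
      mul_inv_cancel₀ Real.pi_ne_zero, one_mul]
  rw [step2]
  -- now pure algebra
  unfold hyp2F1
  rw [Finset.sum_mul, Finset.sum_mul, Finset.sum_div]
  refine Finset.sum_congr rfl fun j hj => ?_
  have hjk : j ≤ k := Nat.lt_succ_iff.mp (Finset.mem_range.mp hj)
  have hv : ∑ i ∈ Finset.range (j+1), (j.choose i : ℝ) *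
        ((ascPochhammer ℝ i).eval ((α:ℝ) + 1/2) * (ascPochhammer ℝ (j-i)).eval ((β:ℝ) + 1/2))
      = ((α+β+j).factorial : ℝ) / ((α+β).factorial) := by
    rw [← my_asc_vander, show ((α:ℝ)+1/2) + ((β:ℝ)+1/2) = ((α+β:ℕ):ℝ) + 1 by push_cast; ring,
      my_asc_eval_nat]
  have hg1 : Real.Gamma (((α:ℝ) + β + 1) + j) = ((α+β+j).factorial : ℝ) := by
    rw [show ((α:ℝ)+β+1) + j = ((α+β+j:ℕ):ℝ) + 1 by push_cast; ring,
      Real.Gamma_nat_eq_factorial]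
  have hg2 : Real.Gamma ((α:ℝ) + β + 1) = ((α+β).factorial : ℝ) := by
    rw [show (α:ℝ)+β+1 = ((α+β:ℕ):ℝ) + 1 by push_cast; ring,
      Real.Gamma_nat_eq_factorial]
  have hgg : ggc α * ggc β
      = ((2*α).factorial * (2*β).factorial : ℝ) / (4^(α+β) * α.factorial * β.factorial) := by
    unfold ggc
    rw [pow_add]
    field_simp
  calc ∑ i ∈ Finset.range (j+1),
        ((-1:ℝ)^k * (k.choose (k-j)) * (-2)^j / (j.factorial) * (j.choose i))
          * (ggc (α+i) * ggc (β+(j-i)))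
      = ((-1:ℝ)^k * (k.choose (k-j)) * (-2)^j / (j.factorial)) * (ggc α * ggc β) *
          ∑ i ∈ Finset.range (j+1), (j.choose i : ℝ) *
            ((ascPochhammer ℝ i).eval ((α:ℝ) + 1/2) *
             (ascPochhammer ℝ (j-i)).eval ((β:ℝ) + 1/2)) := by
        rw [Finset.mul_sum]
        refine Finset.sum_congr rfl fun i _ => ?_
        rw [ggc_shift α i, ggc_shift β (j-i)]
        ring
    _ = _ := by
        rw [hv, Nat.choose_symm hjk, hg1, hg2, hgg]
        ring

end Aux
end
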